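/- Let R be a commutative local ring, let Q be an R-module that can be generated by μ elements, let t ≥ μ, and let π : R^t → Q be a surjective R-linear map. Then the kernel of π has a direct summand that is a free R-module of rank t − μ. -/
import Mathlib


/-- An `R`-module `N` has a free direct summand of rank `m` iff there is a split
surjection from `N` onto `R^m`. -/
def HasFreeSummand (R : Type*) [CommRing R] (N : Type*) [AddCommGroup N] [Module R N]
    (m : ℕ) : Prop :=
  ∃ f : N →ₗ[R] (Fin m → R), ∃ g : (Fin m → R) →ₗ[R] N, f.comp g = LinearMap.id

/-- Let `R` be a commutative local ring, `Q` an `R`-module generated by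
`μ` elements, `t ≥ μ`, and `π : R^t → Q` a surjective `R`-linear map. Then the kernel of
`π` has a direct summand that is a free `R`-module of rank `t − μ`. -/
theorem fibers_stmt13 {R : Type*} [CommRing R] [IsLocalRing R]
    (Q : Type*) [AddCommGroup Q] [Module R Q] (μ t : ℕ)
    (hgen : ∃ v : Fin μ → Q, Submodule.span R (Set.range v) = ⊤)
    (htμ : μ ≤ t)
    (π : (Fin t → R) →ₗ[R] Q) (hπ : Function.Surjective π) :
    HasFreeSummand R (↥(LinearMap.ker π)) (t - μ) := by
  classical
  obtain ⟨v, hv⟩ := hgen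
  set s := t - μ with hs
  set k := IsLocalRing.ResidueField R with hk
  -- residue maps, componentwise
  let r : (Fin t → R) →ₗ[R] (Fin t → k) := (Algebra.linearMap R k).compLeft (Fin t)
  let r' : (Fin s → R) →ₗ[R] (Fin s → k) := (Algebra.linearMap R k).compLeft (Fin s)
  -- lifts of the generators
  choose u hu using fun i => hπ (v i)
  -- the span of the image of `ker π` in `k^t`, and the span of the images of the lifts
  set W : Submodule k (Fin t → k) :=
    Submodule.span k (r '' (LinearMap.ker π : Set (Fin t → R))) with hW
  set U : Submodule k (Fin t → k) :=
    Submodule.span k (Set.range fun i => r (u i)) with hU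
  have hre : ∀ i : Fin t, r (Pi.single i 1) = Pi.basisFun k (Fin t) i := by
    intro i
    funext j
    simp only [r, LinearMap.compLeft_apply, Function.comp_apply, Pi.basisFun_apply]
    simp [Pi.single_apply, apply_ite (algebraMap R k)]
  have hWU : W ⊔ U = ⊤ := by
    rw [eq_top_iff, ← (Pi.basisFun k (Fin t)).span_eq, Submodule.span_le]
    rintro - ⟨j, rfl⟩
    obtain ⟨c, hc⟩ := (Submodule.mem_span_range_iff_exists_fun R).1
      (hv ▸ Submodule.mem_top (x := π (Pi.single j 1)))
    have hy : (Pi.single j 1 - ∑ i, c i • u i) ∈ LinearMap.ker π := by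
      simp [LinearMap.mem_ker, map_sub, map_sum, map_smul, hu, hc]
    have : Pi.basisFun k (Fin t) j
        = r (Pi.single j 1 - ∑ i, c i • u i) + ∑ i, c i • r (u i) := by
      rw [map_sub, map_sum]
      simp only [map_smul]
      rw [sub_add_cancel, hre]
    rw [this]
    refine Submodule.add_mem _ (Submodule.mem_sup_left ?_) (Submodule.mem_sup_right ?_)
    · exact Submodule.subset_span ⟨_, hy, rfl⟩
    · refine Submodule.sum_mem _ fun i _ => ?_
      rw [← algebraMap_smul k (c i)]
      exact Submodule.smul_mem _ _ (Submodule.subset_span ⟨i, rfl⟩)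
  -- dimension count
  have hd : s ≤ Module.finrank k ((Fin t → k) ⧸ U) := by
    have h1 : Module.finrank k ((Fin t → k) ⧸ U) + Module.finrank k U
        = Module.finrank k (Fin t → k) := U.finrank_quotient_add_finrank
    have h2 : Module.finrank k U ≤ μ :=
      (finrank_range_le_card _).trans_eq (Fintype.card_fin μ)
    have h3 : Module.finrank k (Fin t → k) = t := by
      rw [Module.finrank_pi, Fintype.card_fin]
    omega
  let b := Module.finBasis k ((Fin t → k) ⧸ U)
  let φ : (Fin t → k) →ₗ[k] (Fin s → k) :=
    (LinearMap.funLeft k k (Fin.castLE hd)) ∘ₗ b.equivFun.toLinearMap ∘ₗ U.mkQ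
  have hφsurj : Function.Surjective φ := by
    simp only [φ, LinearMap.coe_comp, LinearEquiv.coe_coe]
    exact (LinearMap.funLeft_surjective_of_injective k k _
      (Fin.castLE_injective hd)).comp
      (b.equivFun.surjective.comp (Submodule.mkQ_surjective U))
  have hφU : Submodule.map φ U = ⊥ := by
    rw [eq_bot_iff]
    rintro - ⟨x, hx, rfl⟩
    have : U.mkQ x = 0 := by rwa [Submodule.mkQ_apply, Submodule.Quotient.mk_eq_zero]
    simp [φ, this]
  have hWtop : Submodule.map φ W = ⊤ := by
    have h := congrArg (Submodule.map φ) hWU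
    rwa [Submodule.map_sup, hφU, sup_bot_eq, Submodule.map_top,
      LinearMap.range_eq_top.2 hφsurj] at h
  -- the `R`-linear composite `k^t → k^s` precomposed with the residue map
  let g : (Fin t → R) →ₗ[R] (Fin s → k) := (φ.restrictScalars R) ∘ₗ r
  -- lift `g` to an `R`-linear map `f : R^t → R^s`
  choose a ha using fun (j : Fin s) (i : Fin t) =>
    IsLocalRing.residue_surjective (R := R) (g (Pi.single i 1) j)
  let f : (Fin t → R) →ₗ[R] (Fin s → R) := (Matrix.of a).mulVecLin
  have hρ : (IsLocalRing.residue R : R → k) = algebraMap R k := rfl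
  have hkey : ∀ x, r' (f x) = g x := by
    intro x
    funext j
    have hx : x = ∑ i, x i • (Pi.single i 1 : Fin t → R) := by
      funext j'; simp [Pi.single_apply]
    calc r' (f x) j = algebraMap R k (∑ i, a j i * x i) := rfl
      _ = ∑ i, algebraMap R k (a j i) * algebraMap R k (x i) := by
          rw [map_sum]; simp [map_mul]
      _ = ∑ i, g (Pi.single i 1) j * algebraMap R k (x i) := by
          simp only [← hρ, ha]
      _ = ∑ i, (x i • g (Pi.single i 1)) j := by
          refine Finset.sum_congr rfl fun i _ => ?_
          simp [Algebra.smul_def, mul_comm]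
      _ = g x j := by
          conv_rhs => rw [hx]
          rw [map_sum]
          simp only [map_smul]
          simp
  set F : (↥(LinearMap.ker π)) →ₗ[R] (Fin s → R) := f ∘ₗ (LinearMap.ker π).subtype with hF
  set P : Submodule R (Fin s → R) :=
    LinearMap.range F ⊔ (IsLocalRing.maximalIdeal R) • ⊤ with hP
  -- the image of `P` in `k^s` is a `k`-submodule
  let Z : Submodule k (Fin s → k) :=
    { carrier := (P.map r' : Set (Fin s → k))
      add_mem' := fun h1 h2 => (P.map r').add_mem h1 h2
      zero_mem' := (P.map r').zero_mem
      smul_mem' := by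
        rintro c x ⟨z, hz, rfl⟩
        obtain ⟨c', rfl⟩ := IsLocalRing.residue_surjective c
        exact ⟨c' • z, P.smul_mem c' hz, by rw [map_smul, hρ, algebraMap_smul]⟩ }
  have hZtop : ∀ w : Fin s → k, w ∈ Z := by
    have himg : φ '' (r '' (LinearMap.ker π : Set (Fin t → R)))
        = (fun x => g x) '' (LinearMap.ker π : Set (Fin t → R)) := by
      rw [Set.image_image]; rfl
    have h1 : Submodule.span k ((fun x => g x) '' (LinearMap.ker π : Set (Fin t → R))) = ⊤ := by
      rw [← himg, ← Submodule.map_span, ← hW, hWtop]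
    intro w
    have hw : w ∈ Submodule.span k ((fun x => g x) '' (LinearMap.ker π : Set (Fin t → R))) := by
      rw [h1]; trivial
    refine Submodule.span_le.2 ?_ hw
    rintro - ⟨x, hx, rfl⟩
    exact ⟨f x, Submodule.mem_sup_left ⟨⟨x, hx⟩, rfl⟩, hkey x⟩
  -- every element of `R^s` lies in `P`
  have hPtop : ∀ z : Fin s → R, z ∈ P := by
    intro z
    obtain ⟨p, hp, hpz⟩ := hZtop (r' z)
    have hsub : z - p ∈ (IsLocalRing.maximalIdeal R) • (⊤ : Submodule R (Fin s → R)) := by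
      have hcoord : ∀ j, (z - p) j ∈ IsLocalRing.maximalIdeal R := by
        intro j
        have h0 : r' (z - p) = 0 := by rw [map_sub, hpz, sub_self]
        have : algebraMap R k ((z - p) j) = 0 := congrFun h0 j
        exact (Ideal.Quotient.eq_zero_iff_mem).1 this
      have hz : z - p = ∑ j, (z - p) j • (Pi.single j 1 : Fin s → R) := by
        funext j'; simp [Pi.single_apply]
      rw [hz]
      exact Submodule.sum_mem _ fun j _ =>
        Submodule.smul_mem_smul (hcoord j) Submodule.mem_top
    have : z = p + (z - p) := by ring
    rw [this]
    exact P.add_mem hp (Submodule.mem_sup_right hsub)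
  -- Nakayama: `F` is surjective
  have hrange : Function.Surjective F := by
    rw [← LinearMap.range_eq_top, eq_top_iff]
    refine Submodule.le_of_le_smul_of_le_jacobson_bot (I := IsLocalRing.maximalIdeal R)
      (Module.Finite.fg_top) ?_ ?_
    · rw [IsLocalRing.jacobson_eq_maximalIdeal ⊥ bot_ne_top]
    · exact fun z _ => hPtop z
  obtain ⟨G, hG⟩ := Module.projective_lifting_property F LinearMap.id hrange
  exact ⟨F, G, hG⟩
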